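/- Let f : C → D be a graded coalgebra homomorphism over a field, where D is strongly ℕ-graded. Then the following are equivalent: (a) f_0 and f_1 are injective and C is strongly ℕ-graded; (b) f_n is injective for every n; (c) f is injective; (d) f_0 and f_1 are injective and C(n) = C_0^{∧n} for all n; (e) f_0 and f_1 are injective and C(2) = C_0^{∧2}. -/

import Mathlib

open TensorProduct DirectSum

universe u

variable (k : Type u) [Field k]

/-- Transport along an equality of indices. -/
def lcast (C : ℕ → Type u) [∀ n, AddCommGroup (C n)] [∀ n, Module k (C n)]
    {m n : ℕ} (h : m = n) : C m ≃ₗ[k] C n := by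
  subst h; exact LinearEquiv.refl k (C m)

section WedgePowers

variable (A : Type u) [AddCommGroup A] [Module k A] [Coalgebra k A]

/-- The iterated quotient-tensor spaces `(A/D)^{⊗(n+1)}`. -/
noncomputable def Qp (D : Submodule k A) : ℕ → ModuleCat.{u} k
  | 0 => ModuleCat.of k (A ⧸ D)
  | n + 1 => ModuleCat.of k ((A ⧸ D) ⊗[k] (Qp D n))

/-- The map `p^{⊗(n+1)} ∘ Δ^n : A → (A/D)^{⊗(n+1)}`. -/
noncomputable def psiMap (D : Submodule k A) : ∀ n : ℕ, A →ₗ[k] Qp k A D n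
  | 0 => D.mkQ
  | n + 1 => (TensorProduct.map D.mkQ (psiMap D n)) ∘ₗ
      (Coalgebra.comul : A →ₗ[k] A ⊗[k] A)

/-- The iterated wedge powers `D^{∧n}`, with `D^{∧0} = 0`. -/
noncomputable def wpow (D : Submodule k A) : ℕ → Submodule k A
  | 0 => ⊥
  | n + 1 => LinearMap.ker (psiMap k A D n)

end WedgePowers

/-- The truncation `C(m) = ⊕_{i<m} C_i` as a submodule. -/
noncomputable def truncSub (C : ℕ → Type u) [∀ n, AddCommGroup (C n)] [∀ n, Module k (C n)]
    (m : ℕ) : Submodule k (⨁ n, C n) :=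
  ⨆ i : Fin m, LinearMap.range (DirectSum.lof k ℕ C i.1)

/-! ### Auxiliary lemmas -/

section Aux

variable {k}
variable {E : ℕ → Type u} [∀ n, AddCommGroup (E n)] [∀ n, Module k (E n)]

lemma aux_comp_lof_ne {i j : ℕ} (h : j ≠ i) :
    (DirectSum.component k ℕ E i) ∘ₗ DirectSum.lof k ℕ E j = 0 := by
  ext b
  simp [DirectSum.component.of, h]

lemma aux_comp_lof_self (i : ℕ) :
    (DirectSum.component k ℕ E i) ∘ₗ DirectSum.lof k ℕ E i = LinearMap.id := by
  ext b; simp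

lemma aux_lcomp_sum {M N P : Type u} [AddCommGroup M] [AddCommGroup N] [AddCommGroup P]
    [Module k M] [Module k N] [Module k P] {ι : Type*} (s : Finset ι)
    (g : N →ₗ[k] P) (h : ι → (M →ₗ[k] N)) :
    g ∘ₗ (∑ i ∈ s, h i) = ∑ i ∈ s, g ∘ₗ h i := by
  ext x; simp

/-- Membership in the truncation via components. -/
lemma aux_mem_truncSub_iff (m : ℕ) (x : ⨁ n, E n) :
    x ∈ truncSub k E m ↔ ∀ j, m ≤ j → DirectSum.component k ℕ E j x = 0 := by
  classical
  constructor
  · intro hx j hj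
    have hle : truncSub k E m ≤ LinearMap.ker (DirectSum.component k ℕ E j) := by
      apply iSup_le
      intro i
      rintro _ ⟨c, rfl⟩
      have hij : (i : ℕ) ≠ j := by omega
      have h0 : (DirectSum.component k ℕ E j) ((DirectSum.lof k ℕ E i.1) c) = 0 := by
        simp [DirectSum.component.of, hij]
      exact LinearMap.mem_ker.mpr h0
    exact hle hx
  · intro hx
    rw [← DirectSum.sum_support_of x]
    apply Submodule.sum_mem
    intro n hn
    have hnm : n < m := by
      by_contra hc
      push_neg at hc
      exact (DFinsupp.mem_support_iff.mp hn) (hx n hc)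
    have : (DirectSum.of E n) (x n) ∈ LinearMap.range (DirectSum.lof k ℕ E n) :=
      ⟨x n, rfl⟩
    exact (le_iSup (fun i : Fin m => LinearMap.range (DirectSum.lof k ℕ E i.1)) ⟨n, hnm⟩) this

lemma aux_ext_eq {x y : ⨁ n, E n} (h : ∀ j, DirectSum.component k ℕ E j x =
    DirectSum.component k ℕ E j y) : x = y :=
  DFinsupp.ext h

/-- Tensor product of injective maps is injective over a field. -/
lemma aux_mapInj {M N P Q : Type u} [AddCommGroup M] [AddCommGroup N] [AddCommGroup P]
    [AddCommGroup Q] [Module k M] [Module k N] [Module k P] [Module k Q]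
    {f : M →ₗ[k] P} {g : N →ₗ[k] Q} (hf : Function.Injective f) (hg : Function.Injective g) :
    Function.Injective (TensorProduct.map f g) := by
  rw [← LinearMap.lTensor_comp_rTensor, LinearMap.coe_comp]
  exact (Module.Flat.lTensor_preserves_injective_linearMap g hg).comp
    (Module.Flat.rTensor_preserves_injective_linearMap f hf)

/-- Kernel of a tensor product of maps, over a field. -/
lemma aux_kerMap {M N P Q : Type u} [AddCommGroup M] [AddCommGroup N] [AddCommGroup P]
    [AddCommGroup Q] [Module k M] [Module k N] [Module k P] [Module k Q]
    (f : M →ₗ[k] P) (g : N →ₗ[k] Q) (hf : Function.Surjective f) :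
    LinearMap.ker (TensorProduct.map f g) =
      LinearMap.range (LinearMap.lTensor M (LinearMap.ker g).subtype) ⊔
        LinearMap.range (LinearMap.rTensor N (LinearMap.ker f).subtype) := by
  have hfac : TensorProduct.map f g =
      (LinearMap.lTensor P (LinearMap.range g).subtype) ∘ₗ
        TensorProduct.map f g.rangeRestrict := by
    apply TensorProduct.ext'
    intro x y
    rfl
  have hinj : Function.Injective (LinearMap.lTensor P (LinearMap.range g).subtype) :=
    Module.Flat.lTensor_preserves_injective_linearMap _ (Submodule.injective_subtype _)
  have hker : LinearMap.ker (TensorProduct.map f g) =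
      LinearMap.ker (TensorProduct.map f g.rangeRestrict) := by
    rw [hfac, LinearMap.ker_comp, LinearMap.ker_eq_bot.mpr hinj, Submodule.comap_bot]
  rw [hker, TensorProduct.map_ker (f.exact_subtype_ker_map) hf
    (g.rangeRestrict.exact_subtype_ker_map) (LinearMap.surjective_rangeRestrict g),
    LinearMap.ker_rangeRestrict]

variable [Coalgebra k (⨁ n, E n)]

/-- Projecting the comultiplication of a graded coalgebra onto a homogeneous component. -/
lemma aux_piComul (Δab : ∀ a b : ℕ, E (a + b) →ₗ[k] E a ⊗[k] E b)
    (hgr : ∀ n : ℕ, Coalgebra.comul ∘ₗ DirectSum.lof k ℕ E n =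
      ∑ p ∈ (Finset.HasAntidiagonal.antidiagonal n).attach,
        (TensorProduct.map (DirectSum.lof k ℕ E p.1.1) (DirectSum.lof k ℕ E p.1.2)) ∘ₗ
          Δab p.1.1 p.1.2 ∘ₗ
            (lcast k E (Finset.HasAntidiagonal.mem_antidiagonal.mp p.2).symm).toLinearMap)
    (i j : ℕ) :
    (TensorProduct.map (DirectSum.component k ℕ E i) (DirectSum.component k ℕ E j)) ∘ₗ
      (Coalgebra.comul : (⨁ n, E n) →ₗ[k] _) = Δab i j ∘ₗ DirectSum.component k ℕ E (i + j) := by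
  apply DirectSum.linearMap_ext
  intro n
  rw [LinearMap.comp_assoc, LinearMap.comp_assoc, hgr n, aux_lcomp_sum]
  have hterm : ∀ p : {p // p ∈ Finset.HasAntidiagonal.antidiagonal n}, p.1.1 ≠ i ∨ p.1.2 ≠ j →
      (TensorProduct.map (DirectSum.component k ℕ E i) (DirectSum.component k ℕ E j)) ∘ₗ
        ((TensorProduct.map (DirectSum.lof k ℕ E p.1.1) (DirectSum.lof k ℕ E p.1.2)) ∘ₗ
          Δab p.1.1 p.1.2 ∘ₗ
            (lcast k E (Finset.HasAntidiagonal.mem_antidiagonal.mp p.2).symm).toLinearMap) = 0 := by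
    intro p hp
    rw [← LinearMap.comp_assoc, ← TensorProduct.map_comp]
    rcases hp with hp | hp
    · rw [aux_comp_lof_ne hp, TensorProduct.map_zero_left, LinearMap.zero_comp]
    · rw [aux_comp_lof_ne hp, TensorProduct.map_zero_right, LinearMap.zero_comp]
  by_cases hn : n = i + j
  · subst hn
    rw [Finset.sum_eq_single_of_mem
      (⟨(i, j), Finset.HasAntidiagonal.mem_antidiagonal.mpr rfl⟩ : {p // p ∈ Finset.HasAntidiagonal.antidiagonal (i + j)})
      (Finset.mem_attach _ _)]
    · rw [← LinearMap.comp_assoc, ← TensorProduct.map_comp, aux_comp_lof_self,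
        aux_comp_lof_self, TensorProduct.map_id, LinearMap.id_comp, aux_comp_lof_self,
        LinearMap.comp_id]
      rfl
    · intro b _ hb
      apply hterm
      by_contra hc
      push_neg at hc
      exact hb (Subtype.ext (Prod.ext hc.1 hc.2))
  · rw [Finset.sum_eq_zero, aux_comp_lof_ne hn, LinearMap.comp_zero]
    intro p _
    apply hterm
    by_contra hc
    push_neg at hc
    exact hn (by rw [← Finset.HasAntidiagonal.mem_antidiagonal.mp p.2, hc.1, hc.2])

end Aux

section Main

variable {k}
variable {C D : ℕ → Type u}
    [∀ n, AddCommGroup (C n)] [∀ n, Module k (C n)]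
    [∀ n, AddCommGroup (D n)] [∀ n, Module k (D n)]
    [Coalgebra k (⨁ n, C n)] [Coalgebra k (⨁ n, D n)]

lemma aux_fn_lcast (fn : ∀ n, C n →ₗ[k] D n) {m n : ℕ} (h : m = n) (c : C m) :
    fn n ((lcast k C h) c) = (lcast k D h) (fn m c) := by
  subst h; rfl

/-- A map commuting with `lof`s commutes with components. -/
lemma aux_compF (f : (⨁ n, C n) →ₗ[k] ⨁ n, D n) (fn : ∀ n, C n →ₗ[k] D n)
    (hf : ∀ n : ℕ, f ∘ₗ DirectSum.lof k ℕ C n = DirectSum.lof k ℕ D n ∘ₗ fn n) (i : ℕ) :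
    DirectSum.component k ℕ D i ∘ₗ f = fn i ∘ₗ DirectSum.component k ℕ C i := by
  apply DirectSum.linearMap_ext
  intro n
  rw [LinearMap.comp_assoc, LinearMap.comp_assoc, hf n, ← LinearMap.comp_assoc]
  by_cases hn : n = i
  · subst hn
    rw [aux_comp_lof_self, aux_comp_lof_self, LinearMap.id_comp, LinearMap.comp_id]
  · rw [aux_comp_lof_ne hn, aux_comp_lof_ne hn, LinearMap.zero_comp, LinearMap.comp_zero]

variable (ΔabC : ∀ a b : ℕ, C (a + b) →ₗ[k] C a ⊗[k] C b)
    (hgrC : ∀ n : ℕ, Coalgebra.comul ∘ₗ DirectSum.lof k ℕ C n =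
      ∑ p ∈ (Finset.HasAntidiagonal.antidiagonal n).attach,
        (TensorProduct.map (DirectSum.lof k ℕ C p.1.1) (DirectSum.lof k ℕ C p.1.2)) ∘ₗ
          ΔabC p.1.1 p.1.2 ∘ₗ
            (lcast k C (Finset.HasAntidiagonal.mem_antidiagonal.mp p.2).symm).toLinearMap)
    (ΔabD : ∀ a b : ℕ, D (a + b) →ₗ[k] D a ⊗[k] D b)
    (hgrD : ∀ n : ℕ, Coalgebra.comul ∘ₗ DirectSum.lof k ℕ D n =
      ∑ p ∈ (Finset.HasAntidiagonal.antidiagonal n).attach,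
        (TensorProduct.map (DirectSum.lof k ℕ D p.1.1) (DirectSum.lof k ℕ D p.1.2)) ∘ₗ
          ΔabD p.1.1 p.1.2 ∘ₗ
            (lcast k D (Finset.HasAntidiagonal.mem_antidiagonal.mp p.2).symm).toLinearMap)

include hgrC hgrD in
/-- The key commutation: `Δ^D_{i,j} ∘ f_{i+j} = (f_i ⊗ f_j) ∘ Δ^C_{i,j}`. -/
lemma aux_key (f : (⨁ n, C n) →ₗ[k] ⨁ n, D n) (fn : ∀ n, C n →ₗ[k] D n)
    (hf : ∀ n : ℕ, f ∘ₗ DirectSum.lof k ℕ C n = DirectSum.lof k ℕ D n ∘ₗ fn n)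
    (hcomul : Coalgebra.comul ∘ₗ f = (TensorProduct.map f f) ∘ₗ Coalgebra.comul)
    (i j : ℕ) :
    ΔabD i j ∘ₗ fn (i + j) = TensorProduct.map (fn i) (fn j) ∘ₗ ΔabC i j := by
  have h1 := aux_piComul ΔabD hgrD i j
  have h2 := aux_piComul ΔabC hgrC i j
  have hfn : fn (i + j) = DirectSum.component k ℕ D (i + j) ∘ₗ f ∘ₗ
      DirectSum.lof k ℕ C (i + j) := by
    rw [hf, ← LinearMap.comp_assoc, aux_comp_lof_self, LinearMap.id_comp]
  calc ΔabD i j ∘ₗ fn (i + j)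
      = (ΔabD i j ∘ₗ DirectSum.component k ℕ D (i + j)) ∘ₗ f ∘ₗ
          DirectSum.lof k ℕ C (i + j) := by
        rw [hfn]; rw [LinearMap.comp_assoc]
    _ = TensorProduct.map (DirectSum.component k ℕ D i) (DirectSum.component k ℕ D j) ∘ₗ
          (Coalgebra.comul ∘ₗ f) ∘ₗ DirectSum.lof k ℕ C (i + j) := by
        rw [← h1]; rw [LinearMap.comp_assoc, LinearMap.comp_assoc]
    _ = (TensorProduct.map (DirectSum.component k ℕ D i ∘ₗ f)
          (DirectSum.component k ℕ D j ∘ₗ f)) ∘ₗ Coalgebra.comul ∘ₗ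
          DirectSum.lof k ℕ C (i + j) := by
        rw [hcomul, TensorProduct.map_comp, LinearMap.comp_assoc, LinearMap.comp_assoc]
    _ = (TensorProduct.map (fn i ∘ₗ DirectSum.component k ℕ C i)
          (fn j ∘ₗ DirectSum.component k ℕ C j)) ∘ₗ Coalgebra.comul ∘ₗ
          DirectSum.lof k ℕ C (i + j) := by
        rw [aux_compF f fn hf i, aux_compF f fn hf j]
    _ = TensorProduct.map (fn i) (fn j) ∘ₗ
          ((TensorProduct.map (DirectSum.component k ℕ C i) (DirectSum.component k ℕ C j)) ∘ₗ
            Coalgebra.comul) ∘ₗ DirectSum.lof k ℕ C (i + j) := by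
        rw [TensorProduct.map_comp, LinearMap.comp_assoc, LinearMap.comp_assoc]
    _ = TensorProduct.map (fn i) (fn j) ∘ₗ ΔabC i j := by
        rw [h2, LinearMap.comp_assoc, aux_comp_lof_self, LinearMap.comp_id]

end Main

section Psi

variable {k}
variable {C : ℕ → Type u} [∀ n, AddCommGroup (C n)] [∀ n, Module k (C n)]
    [Coalgebra k (⨁ n, C n)]

lemma aux_psi_zero :
    psiMap k (⨁ n, C n) (LinearMap.range (DirectSum.lof k ℕ C 0)) 0 =
      (LinearMap.range (DirectSum.lof k ℕ C 0)).mkQ := rfl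

lemma aux_psi_succ (n : ℕ) :
    psiMap k (⨁ n, C n) (LinearMap.range (DirectSum.lof k ℕ C 0)) (n + 1) =
      (TensorProduct.map (LinearMap.range (DirectSum.lof k ℕ C 0)).mkQ
        (psiMap k (⨁ n, C n) (LinearMap.range (DirectSum.lof k ℕ C 0)) n)) ∘ₗ
          (Coalgebra.comul : (⨁ n, C n) →ₗ[k] _) := rfl

lemma aux_mkQ_lof_zero :
    (LinearMap.range (DirectSum.lof k ℕ C 0)).mkQ ∘ₗ DirectSum.lof k ℕ C 0 = 0 := by
  ext c
  simp only [LinearMap.comp_apply, Submodule.mkQ_apply, LinearMap.zero_apply]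
  rw [Submodule.Quotient.mk_eq_zero]
  exact ⟨c, rfl⟩

variable (ΔabC : ∀ a b : ℕ, C (a + b) →ₗ[k] C a ⊗[k] C b)
    (hgrC : ∀ n : ℕ, Coalgebra.comul ∘ₗ DirectSum.lof k ℕ C n =
      ∑ p ∈ (Finset.HasAntidiagonal.antidiagonal n).attach,
        (TensorProduct.map (DirectSum.lof k ℕ C p.1.1) (DirectSum.lof k ℕ C p.1.2)) ∘ₗ
          ΔabC p.1.1 p.1.2 ∘ₗ
            (lcast k C (Finset.HasAntidiagonal.mem_antidiagonal.mp p.2).symm).toLinearMap)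

include hgrC in
/-- `ψ_n` vanishes on `C_m` for `m ≤ n`. -/
lemma aux_psi_lof : ∀ n m : ℕ, m ≤ n →
    psiMap k (⨁ n, C n) (LinearMap.range (DirectSum.lof k ℕ C 0)) n ∘ₗ
      DirectSum.lof k ℕ C m = 0 := by
  intro n
  induction n with
  | zero =>
    intro m hm
    interval_cases m
    rw [aux_psi_zero]
    exact aux_mkQ_lof_zero
  | succ n ih =>
    intro m hm
    show (TensorProduct.map (LinearMap.range (DirectSum.lof k ℕ C 0)).mkQ
        (psiMap k (⨁ n, C n) (LinearMap.range (DirectSum.lof k ℕ C 0)) n)) ∘ₗ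
          ((Coalgebra.comul : (⨁ n, C n) →ₗ[k] _) ∘ₗ DirectSum.lof k ℕ C m) = 0
    rw [hgrC m, aux_lcomp_sum]
    apply Finset.sum_eq_zero
    intro p _
    rw [← LinearMap.comp_assoc, ← TensorProduct.map_comp]
    rcases Nat.eq_zero_or_pos p.1.1 with h0 | h0
    · have hz : (LinearMap.range (DirectSum.lof k ℕ C 0)).mkQ ∘ₗ
          DirectSum.lof k ℕ C p.1.1 = 0 := by
        rw [h0]; exact aux_mkQ_lof_zero
      rw [hz, TensorProduct.map_zero_left, LinearMap.zero_comp]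
    · have hp2 : p.1.2 ≤ n := by
        have := Finset.HasAntidiagonal.mem_antidiagonal.mp p.2
        omega
      rw [ih p.1.2 hp2, TensorProduct.map_zero_right, LinearMap.zero_comp]

include hgrC in
lemma aux_trunc_le_ker (n : ℕ) :
    truncSub k C (n + 1) ≤
      LinearMap.ker (psiMap k (⨁ n, C n) (LinearMap.range (DirectSum.lof k ℕ C 0)) n) := by
  apply iSup_le
  intro i
  rintro _ ⟨c, rfl⟩
  have hi : (i : ℕ) ≤ n := by omega
  have h0 : psiMap k (⨁ n, C n) (LinearMap.range (DirectSum.lof k ℕ C 0)) n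
      ((DirectSum.lof k ℕ C i.1) c) = 0 :=
    LinearMap.congr_fun (aux_psi_lof ΔabC hgrC n i.1 hi) c
  exact LinearMap.mem_ker.mpr h0

include hgrC in
/-- If `C` is strongly graded, then `ker ψ_n ⊆ C(n+1)`. -/
lemma aux_ker_le_trunc (hstrongC : ∀ i j : ℕ, Function.Injective (ΔabC i j)) :
    ∀ n : ℕ, LinearMap.ker (psiMap k (⨁ n, C n)
      (LinearMap.range (DirectSum.lof k ℕ C 0)) n) ≤ truncSub k C (n + 1) := by
  intro n
  induction n with
  | zero =>
    intro x hx
    have hx0 : x ∈ LinearMap.range (DirectSum.lof k ℕ C 0) := by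
      have := LinearMap.mem_ker.mp hx
      rw [aux_psi_zero] at this
      exact (Submodule.Quotient.mk_eq_zero _).mp this
    obtain ⟨c, rfl⟩ := hx0
    rw [aux_mem_truncSub_iff]
    intro j hj
    have hj0 : (0 : ℕ) ≠ j := by omega
    simp [DirectSum.component.of, hj0]
  | succ n ih =>
    intro x hx
    have hx' : (TensorProduct.map (LinearMap.range (DirectSum.lof k ℕ C 0)).mkQ
        (psiMap k (⨁ n, C n) (LinearMap.range (DirectSum.lof k ℕ C 0)) n))
          (Coalgebra.comul x) = 0 := by
      have := LinearMap.mem_ker.mp hx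
      rw [aux_psi_succ] at this
      exact this
    have hmem : Coalgebra.comul x ∈
        LinearMap.range (LinearMap.lTensor (⨁ n, C n)
          (LinearMap.ker (psiMap k (⨁ n, C n)
            (LinearMap.range (DirectSum.lof k ℕ C 0)) n)).subtype) ⊔
        LinearMap.range (LinearMap.rTensor (⨁ n, C n)
          (LinearMap.ker (LinearMap.range (DirectSum.lof k ℕ C 0)).mkQ).subtype) := by
      rw [← aux_kerMap _ _ (Submodule.mkQ_surjective _)]
      exact LinearMap.mem_ker.mpr hx'
    rw [aux_mem_truncSub_iff]
    intro m hm
    obtain ⟨i, hi, rfl⟩ : ∃ i, 1 ≤ i ∧ m = i + (n + 1) := ⟨m - (n + 1), by omega, by omega⟩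
    apply hstrongC i (n + 1)
    rw [map_zero]
    have hpc := LinearMap.congr_fun (aux_piComul ΔabC hgrC i (n + 1)) x
    simp only [LinearMap.comp_apply] at hpc
    rw [← hpc]
    -- show the projection kills both ranges
    have hker : LinearMap.range (LinearMap.lTensor (⨁ n, C n)
          (LinearMap.ker (psiMap k (⨁ n, C n)
            (LinearMap.range (DirectSum.lof k ℕ C 0)) n)).subtype) ⊔
        LinearMap.range (LinearMap.rTensor (⨁ n, C n)
          (LinearMap.ker (LinearMap.range (DirectSum.lof k ℕ C 0)).mkQ).subtype) ≤
        LinearMap.ker (TensorProduct.map (DirectSum.component k ℕ C i)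
          (DirectSum.component k ℕ C (n + 1))) := by
      apply sup_le
      · rw [LinearMap.range_le_ker_iff]
        apply TensorProduct.ext'
        intro a y
        have hy : DirectSum.component k ℕ C (n + 1) y.1 = 0 := by
          have hy' : (y : ⨁ n, C n) ∈ truncSub k C (n + 1) := ih y.2
          exact (aux_mem_truncSub_iff _ _).mp hy' (n + 1) le_rfl
        simp [hy]
      · rw [LinearMap.range_le_ker_iff]
        apply TensorProduct.ext'
        intro y a
        have hy : DirectSum.component k ℕ C i y.1 = 0 := by
          have hy' : (y : ⨁ n, C n) ∈ LinearMap.range (DirectSum.lof k ℕ C 0) :=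
            (Submodule.Quotient.mk_eq_zero _).mp (LinearMap.mem_ker.mp y.2)
          obtain ⟨c, hc⟩ := hy'
          rw [← hc]
          have hi0 : (0 : ℕ) ≠ i := by omega
          simp [DirectSum.component.of, hi0]
        simp [hy]
    exact LinearMap.mem_ker.mp (hker hmem)

end Psi

section Psi2

variable {k}
variable {C : ℕ → Type u} [∀ n, AddCommGroup (C n)] [∀ n, Module k (C n)]
    [Coalgebra k (⨁ n, C n)]

lemma aux_wpow_succ (D : Submodule k (⨁ n, C n)) (n : ℕ) :
    wpow k (⨁ n, C n) D (n + 1) = LinearMap.ker (psiMap k (⨁ n, C n) D n) := rfl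

lemma aux_wpow_zero (D : Submodule k (⨁ n, C n)) :
    wpow k (⨁ n, C n) D 0 = ⊥ := rfl

lemma aux_truncSub_zero : truncSub k C 0 = ⊥ := by
  refine le_bot_iff.mp (iSup_le fun i => ?_)
  exact absurd i.2 (Nat.not_lt_zero _)

variable (ΔabC : ∀ a b : ℕ, C (a + b) →ₗ[k] C a ⊗[k] C b)
    (hgrC : ∀ n : ℕ, Coalgebra.comul ∘ₗ DirectSum.lof k ℕ C n =
      ∑ p ∈ (Finset.HasAntidiagonal.antidiagonal n).attach,
        (TensorProduct.map (DirectSum.lof k ℕ C p.1.1) (DirectSum.lof k ℕ C p.1.2)) ∘ₗ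
          ΔabC p.1.1 p.1.2 ∘ₗ
            (lcast k C (Finset.HasAntidiagonal.mem_antidiagonal.mp p.2).symm).toLinearMap)

include hgrC in
lemma aux_psi1_eval (m : ℕ) (c : C m)
    (hΔ : ∀ i j (h : m = i + j), 1 ≤ i → 1 ≤ j → ΔabC i j ((lcast k C h) c) = 0) :
    psiMap k (⨁ n, C n) (LinearMap.range (DirectSum.lof k ℕ C 0)) 1
      ((DirectSum.lof k ℕ C m) c) = 0 := by
  have hstep : psiMap k (⨁ n, C n) (LinearMap.range (DirectSum.lof k ℕ C 0)) 1
      ((DirectSum.lof k ℕ C m) c) =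
      TensorProduct.map (LinearMap.range (DirectSum.lof k ℕ C 0)).mkQ
        (LinearMap.range (DirectSum.lof k ℕ C 0)).mkQ
        (Coalgebra.comul ((DirectSum.lof k ℕ C m) c)) := rfl
  have hc := LinearMap.congr_fun (hgrC m) c
  simp only [LinearMap.comp_apply] at hc
  rw [hstep, hc, LinearMap.sum_apply, map_sum]
  apply Finset.sum_eq_zero
  intro p _
  simp only [LinearMap.comp_apply, LinearEquiv.coe_coe]
  set Q := (LinearMap.range (DirectSum.lof k ℕ C 0)).mkQ with hQ
  have hmm : ∀ t, TensorProduct.map Q Q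
      ((TensorProduct.map (DirectSum.lof k ℕ C p.1.1) (DirectSum.lof k ℕ C p.1.2)) t) =
      (TensorProduct.map (Q ∘ₗ DirectSum.lof k ℕ C p.1.1)
        (Q ∘ₗ DirectSum.lof k ℕ C p.1.2)) t := fun t =>
    by rw [TensorProduct.map_comp, LinearMap.comp_apply]
  rw [hmm]
  rcases Nat.eq_zero_or_pos p.1.1 with h1 | h1
  · have hz : Q ∘ₗ DirectSum.lof k ℕ C p.1.1 = 0 := by
      rw [hQ, h1]; exact aux_mkQ_lof_zero
    rw [hz, TensorProduct.map_zero_left, LinearMap.zero_apply]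
    rfl
  · rcases Nat.eq_zero_or_pos p.1.2 with h2 | h2
    · have hz : Q ∘ₗ DirectSum.lof k ℕ C p.1.2 = 0 := by
        rw [hQ, h2]; exact aux_mkQ_lof_zero
      rw [hz, TensorProduct.map_zero_right, LinearMap.zero_apply]
      rfl
    · rw [hΔ p.1.1 p.1.2 (Finset.HasAntidiagonal.mem_antidiagonal.mp p.2).symm h1 h2]
      simp
      rfl

end Psi2

/-- Let `f : C → D` be a graded coalgebra homomorphism over a field, where `D`
is strongly ℕ-graded. Then (a) `f_0, f_1` injective and `C` strongly ℕ-graded; (b) all `f_n`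
injective; (c) `f` injective; (d) `f_0, f_1` injective and `C(n) = C_0^{∧n}` for all `n`;
(e) `f_0, f_1` injective and `C(2) = C_0^{∧2}`, are all equivalent. -/
theorem stmt10 (C D : ℕ → Type u)
    [∀ n, AddCommGroup (C n)] [∀ n, Module k (C n)]
    [∀ n, AddCommGroup (D n)] [∀ n, Module k (D n)]
    [Coalgebra k (⨁ n, C n)] [Coalgebra k (⨁ n, D n)]
    (ΔabC : ∀ a b : ℕ, C (a + b) →ₗ[k] C a ⊗[k] C b)
    (hgrC : ∀ n : ℕ, Coalgebra.comul ∘ₗ DirectSum.lof k ℕ C n =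
      ∑ p ∈ (Finset.HasAntidiagonal.antidiagonal n).attach,
        (TensorProduct.map (DirectSum.lof k ℕ C p.1.1) (DirectSum.lof k ℕ C p.1.2)) ∘ₗ
          ΔabC p.1.1 p.1.2 ∘ₗ
            (lcast k C (Finset.HasAntidiagonal.mem_antidiagonal.mp p.2).symm).toLinearMap)
    (ΔabD : ∀ a b : ℕ, D (a + b) →ₗ[k] D a ⊗[k] D b)
    (hgrD : ∀ n : ℕ, Coalgebra.comul ∘ₗ DirectSum.lof k ℕ D n =
      ∑ p ∈ (Finset.HasAntidiagonal.antidiagonal n).attach,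
        (TensorProduct.map (DirectSum.lof k ℕ D p.1.1) (DirectSum.lof k ℕ D p.1.2)) ∘ₗ
          ΔabD p.1.1 p.1.2 ∘ₗ
            (lcast k D (Finset.HasAntidiagonal.mem_antidiagonal.mp p.2).symm).toLinearMap)
    (hstrongD : ∀ i j : ℕ, Function.Injective (ΔabD i j))
    (f : (⨁ n, C n) →ₗ[k] ⨁ n, D n) (fn : ∀ n, C n →ₗ[k] D n)
    (hf : ∀ n : ℕ, f ∘ₗ DirectSum.lof k ℕ C n = DirectSum.lof k ℕ D n ∘ₗ fn n)
    (hcomul : Coalgebra.comul ∘ₗ f = (TensorProduct.map f f) ∘ₗ Coalgebra.comul)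
    (hcounit : (Coalgebra.counit : (⨁ n, D n) →ₗ[k] k) ∘ₗ f = Coalgebra.counit) :
    [ -- (a)
      (Function.Injective (fn 0) ∧ Function.Injective (fn 1) ∧
        ∀ i j : ℕ, Function.Injective (ΔabC i j)),
      -- (b)
      (∀ n : ℕ, Function.Injective (fn n)),
      -- (c)
      Function.Injective f,
      -- (d)
      (Function.Injective (fn 0) ∧ Function.Injective (fn 1) ∧
        ∀ n : ℕ, truncSub k C n =
          wpow k (⨁ m, C m) (LinearMap.range (DirectSum.lof k ℕ C 0)) n),
      -- (e)
      (Function.Injective (fn 0) ∧ Function.Injective (fn 1) ∧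
        truncSub k C 2 =
          wpow k (⨁ m, C m) (LinearMap.range (DirectSum.lof k ℕ C 0)) 2) ].TFAE := by
  classical
  have key : ∀ i j : ℕ, ΔabD i j ∘ₗ fn (i + j) =
      TensorProduct.map (fn i) (fn j) ∘ₗ ΔabC i j :=
    aux_key ΔabC hgrC ΔabD hgrD f fn hf hcomul
  tfae_have 1 → 2 := by
    rintro ⟨h0, h1, hstrong⟩
    intro n
    induction n using Nat.strong_induction_on with
    | _ n ih =>
      match n with
      | 0 => exact h0
      | 1 => exact h1
      | (l + 2) =>
        have hcinj : Function.Injective (ΔabD 1 (l + 1) ∘ₗ fn (1 + (l + 1))) := by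
          rw [key 1 (l + 1), LinearMap.coe_comp]
          exact (aux_mapInj h1 (ih (l + 1) (by omega))).comp (hstrong 1 (l + 1))
        have hres : Function.Injective (fn (1 + (l + 1))) := by
          intro a b hab
          exact hcinj (by simp only [LinearMap.comp_apply, hab])
        exact (by omega : 1 + (l + 1) = l + 2) ▸ hres
  tfae_have 2 → 3 := by
    intro h2 x y hxy
    apply aux_ext_eq (k := k)
    intro j
    apply h2 j
    have hcF := aux_compF f fn hf j
    have hx := LinearMap.congr_fun hcF x
    have hy := LinearMap.congr_fun hcF y
    simp only [LinearMap.comp_apply] at hx hy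
    rw [← hx, ← hy, hxy]
  tfae_have 3 → 1 := by
    intro h3
    have hinj : ∀ n, Function.Injective (fn n) := by
      intro n a b hab
      have ha := LinearMap.congr_fun (hf n) a
      have hb := LinearMap.congr_fun (hf n) b
      simp only [LinearMap.comp_apply] at ha hb
      have : f ((DirectSum.lof k ℕ C n) a) = f ((DirectSum.lof k ℕ C n) b) := by
        rw [ha, hb, hab]
      have hl := h3 this
      have := congrArg (DirectSum.component k ℕ C n) hl
      rwa [DirectSum.component.lof_self, DirectSum.component.lof_self] at this
    refine ⟨hinj 0, hinj 1, ?_⟩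
    intro i j a b hab
    have h1 := LinearMap.congr_fun (key i j) a
    have h2 := LinearMap.congr_fun (key i j) b
    simp only [LinearMap.comp_apply] at h1 h2
    have : ΔabD i j (fn (i + j) a) = ΔabD i j (fn (i + j) b) := by
      rw [h1, h2, hab]
    exact hinj (i + j) (hstrongD i j this)
  tfae_have 1 → 4 := by
    rintro ⟨h0, h1, hstrong⟩
    refine ⟨h0, h1, ?_⟩
    intro n
    cases n with
    | zero => rw [aux_truncSub_zero, aux_wpow_zero]
    | succ n =>
      rw [aux_wpow_succ]
      exact le_antisymm (aux_trunc_le_ker ΔabC hgrC n) (aux_ker_le_trunc ΔabC hgrC hstrong n)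
  tfae_have 4 → 5 := fun h => ⟨h.1, h.2.1, h.2.2 2⟩
  tfae_have 5 → 2 := by
    rintro ⟨h0, h1, htr⟩
    intro n
    induction n using Nat.strong_induction_on with
    | _ n ih =>
      match n with
      | 0 => exact h0
      | 1 => exact h1
      | (m + 2) =>
        rw [← LinearMap.ker_eq_bot, LinearMap.ker_eq_bot']
        intro c hc
        have hΔ : ∀ i j (h : m + 2 = i + j), 1 ≤ i → 1 ≤ j →
            ΔabC i j ((lcast k C h) c) = 0 := by
          intro i j h hi hj
          have hk := LinearMap.congr_fun (key i j) ((lcast k C h) c)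
          simp only [LinearMap.comp_apply] at hk
          have hz : TensorProduct.map (fn i) (fn j) (ΔabC i j ((lcast k C h) c)) = 0 := by
            rw [← hk, aux_fn_lcast fn h c, hc, map_zero, map_zero]
          have hmapinj : Function.Injective (TensorProduct.map (fn i) (fn j)) :=
            aux_mapInj (ih i (by omega)) (ih j (by omega))
          apply hmapinj
          rw [hz, map_zero]
        have hpsi := aux_psi1_eval ΔabC hgrC (m + 2) c hΔ
        have hmem : (DirectSum.lof k ℕ C (m + 2)) c ∈ truncSub k C 2 := by
          rw [htr, aux_wpow_succ]
          exact LinearMap.mem_ker.mpr hpsi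
        have := (aux_mem_truncSub_iff 2 _).mp hmem (m + 2) (by omega)
        rwa [DirectSum.component.lof_self] at this
  tfae_finish
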